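/- arXiv:0908.3098 — 5 statements merged into one kernel-verified Lean document; each statement's English description precedes it below -/
import Mathlib

section
/- Let M, K be positive integers, let α : ℤ → ℂ, and let H be the M × (MK) matrix with entries H[m,(n,k)] = α(n−m), E the MK × MK diagonal matrix with {0,1}-valued diagonal entries e(n,k), and Q the MK × MK diagonal matrix with nonnegative diagonal entries p(n,k). Let H̃ be the M × M matrix with H̃[i,j] = α(j−i) and Ẽ the M × M diagonal matrix with diagonal entries Ẽ[n,n] = sqrt(Σ_{k=1}^K e(n,k)·p(n,k)). Then det(I_M + H·E·Q·Eᴴ·Hᴴ) = det(I_M + H̃·Ẽ·Ẽᴴ·H̃ᴴ). -/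
open Matrix BigOperators

/-- Proposition 1: with joint multi-cell processing, the determinant defining the per-cell
throughput of the `MK`-user MAC equals that of the equivalent `M`-user MAC with a single
virtual user per cell of amplitude `sqrt (∑ k, e (n,k) * p (n,k))`. -/
theorem det_equivalence
    (M K : ℕ) (hM : 0 < M) (hK : 0 < K) (α : ℤ → ℂ)
    (e p : Fin M × Fin K → ℝ)
    (he : ∀ nk, e nk = 0 ∨ e nk = 1) (hp : ∀ nk, 0 ≤ p nk)
    (H : Matrix (Fin M) (Fin M × Fin K) ℂ)
    (hH : ∀ (m : Fin M) (nk : Fin M × Fin K), H m nk = α ((nk.1 : ℤ) - (m : ℤ)))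
    (E Q : Matrix (Fin M × Fin K) (Fin M × Fin K) ℂ)
    (hE : E = Matrix.diagonal fun nk => (e nk : ℂ))
    (hQ : Q = Matrix.diagonal fun nk => (p nk : ℂ))
    (Htil : Matrix (Fin M) (Fin M) ℂ)
    (hHtil : ∀ i j : Fin M, Htil i j = α ((j : ℤ) - (i : ℤ)))
    (Etil : Matrix (Fin M) (Fin M) ℂ)
    (hEtil : Etil = Matrix.diagonal fun n : Fin M =>
      ((Real.sqrt (∑ k : Fin K, e (n, k) * p (n, k)) : ℝ) : ℂ)) :
    (1 + H * E * Q * Eᴴ * Hᴴ).det = (1 + Htil * Etil * Etilᴴ * Htilᴴ).det := by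
  have key : H * E * Q * Eᴴ * Hᴴ = Htil * Etil * Etilᴴ * Htilᴴ := by
    subst hE hQ hEtil
    have hEQE : (Matrix.diagonal fun nk => (e nk : ℂ)) *
        (Matrix.diagonal fun nk => (p nk : ℂ)) *
        (Matrix.diagonal fun nk => (e nk : ℂ))ᴴ
        = Matrix.diagonal (fun nk => ((e nk * p nk : ℝ) : ℂ)) := by
      ext nk nk'
      by_cases hnk : nk = nk'
      · subst hnk
        simp only [Matrix.mul_apply, Matrix.diagonal_apply, conjTranspose_apply,
          Finset.sum_ite_eq, Finset.mem_univ, if_true]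
        simp only [ite_mul, mul_ite, zero_mul, mul_zero, Finset.sum_ite_eq,
          Finset.mem_univ, if_true]
        rcases he nk with h | h <;> simp [h]
      · simp [Matrix.mul_apply, Matrix.diagonal_apply, conjTranspose_apply, hnk,
          Finset.sum_ite_eq, ite_mul, mul_ite]
    have hEE : (Matrix.diagonal fun n : Fin M =>
          ((Real.sqrt (∑ k : Fin K, e (n, k) * p (n, k)) : ℝ) : ℂ)) *
        (Matrix.diagonal fun n : Fin M =>
          ((Real.sqrt (∑ k : Fin K, e (n, k) * p (n, k)) : ℝ) : ℂ))ᴴ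
        = Matrix.diagonal (fun n : Fin M =>
            ((∑ k : Fin K, e (n, k) * p (n, k) : ℝ) : ℂ)) := by
      ext n n'
      by_cases hn : n = n'
      · subst hn
        have hS : 0 ≤ ∑ k : Fin K, e (n, k) * p (n, k) := by
          apply Finset.sum_nonneg
          intro k _
          rcases he (n, k) with h | h <;> simp [h, hp (n, k)]
        simp only [Matrix.mul_apply, Matrix.diagonal_apply, conjTranspose_apply,
          ite_mul, mul_ite, zero_mul, mul_zero, Finset.sum_ite_eq,
          Finset.mem_univ, if_true, RCLike.star_def, Complex.conj_ofReal]
        rw [← Complex.ofReal_mul, Real.mul_self_sqrt hS]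
      · simp [Matrix.mul_apply, Matrix.diagonal_apply, conjTranspose_apply, hn,
          Finset.sum_ite_eq, ite_mul, mul_ite]
    have h1 : H * (Matrix.diagonal fun nk => (e nk : ℂ)) *
        (Matrix.diagonal fun nk => (p nk : ℂ)) *
        (Matrix.diagonal fun nk => (e nk : ℂ))ᴴ * Hᴴ
        = H * Matrix.diagonal (fun nk => ((e nk * p nk : ℝ) : ℂ)) * Hᴴ := by
      rw [Matrix.mul_assoc H, Matrix.mul_assoc H, hEQE]
    have h2 : Htil * (Matrix.diagonal fun n : Fin M =>
          ((Real.sqrt (∑ k : Fin K, e (n, k) * p (n, k)) : ℝ) : ℂ)) *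
        (Matrix.diagonal fun n : Fin M =>
          ((Real.sqrt (∑ k : Fin K, e (n, k) * p (n, k)) : ℝ) : ℂ))ᴴ * Htilᴴ
        = Htil * Matrix.diagonal (fun n : Fin M =>
            ((∑ k : Fin K, e (n, k) * p (n, k) : ℝ) : ℂ)) * Htilᴴ := by
      rw [Matrix.mul_assoc Htil, hEE]
    have entry : ∀ {I : Type} [Fintype I] [DecidableEq I] (A : Matrix (Fin M) I ℂ)
        (f : I → ℂ) (i j : Fin M),
        (A * Matrix.diagonal f * Aᴴ) i j = ∑ x, A i x * f x * star (A j x) := by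
      intro I _ _ A f i j
      rw [Matrix.mul_apply]
      refine Finset.sum_congr rfl fun x _ => ?_
      rw [Matrix.mul_diagonal, conjTranspose_apply]
    rw [h1, h2]
    ext m m'
    rw [entry, entry]
    rw [Fintype.sum_prod_type]
    refine Finset.sum_congr rfl fun n _ => ?_
    simp only [hH, hHtil, Complex.ofReal_sum, Finset.sum_mul, Finset.mul_sum]
  rw [key]
end

section
/- Let q̃ ∈ (0,1), γ > 0, ν > 0 and β > 0 satisfy q̃ + (1−q̃)/(1+γν) = 1/(1+γβν). Then (1−q̃)·log₂(1+γν) − log₂(1+γβν) = q̃·log₂(q̃/(1−β)) + (1−q̃)·log₂((1−q̃)/β), i.e., the left-hand side equals the relative entropy d(q̃ ‖ 1−β) in bits between the Bernoulli(1−q̃) and Bernoulli(β) distributions. -/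
/-- Specialization of Tulino et al.'s mutual information formula to erasure fading:
under the Bernoulli fixed-point equation, the fading terms reduce to the binary relative
entropy `d(q̃ ‖ 1-β)` in bits. -/
theorem erasure_rate_relative_entropy
    (qt γ ν β : ℝ) (hq0 : 0 < qt) (hq1 : qt < 1)
    (hγ : 0 < γ) (hν : 0 < ν) (hβ : 0 < β)
    (hfix : qt + (1 - qt) / (1 + γ * ν) = 1 / (1 + γ * β * ν)) :
    (1 - qt) * Real.logb 2 (1 + γ * ν) - Real.logb 2 (1 + γ * β * ν) =
      qt * Real.logb 2 (qt / (1 - β)) + (1 - qt) * Real.logb 2 ((1 - qt) / β) := by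
  have hx : (0:ℝ) < 1 + γ * ν := by nlinarith
  have hy : (0:ℝ) < 1 + γ * β * ν := by positivity
  have hxne : (1 + γ * ν) ≠ 0 := ne_of_gt hx
  have hyne : (1 + γ * β * ν) ≠ 0 := ne_of_gt hy
  have key : qt * (1 + γ * ν) * (1 + γ * β * ν) + (1 - qt) * (1 + γ * β * ν)
      = 1 + γ * ν := by
    field_simp at hfix
    linarith [hfix]
  have hgn : (γ * ν) ≠ 0 := ne_of_gt (mul_pos hγ hν)
  have h1 : qt * (1 + γ * β * ν) = 1 - β := by
    have h1' : qt * (1 + γ * β * ν) * (γ * ν) = (1 - β) * (γ * ν) := by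
      linear_combination key
    exact mul_right_cancel₀ hgn h1'
  have h2 : (1 - qt) * (1 + γ * β * ν) = β * (1 + γ * ν) := by
    linear_combination -h1
  have hβ1 : β < 1 := by nlinarith
  have h1βne : (1 - β) ≠ 0 := ne_of_gt (by linarith)
  have e1 : qt / (1 - β) = 1 / (1 + γ * β * ν) := by
    field_simp
    linarith [h1]
  have e2 : (1 - qt) / β = (1 + γ * ν) / (1 + γ * β * ν) := by
    field_simp
    linear_combination h2
  rw [e1, e2, Real.logb_div one_ne_zero hyne, Real.logb_div hxne hyne,
    Real.logb_one]
  ring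
end

section
/- Let α₀, α₁ ∈ ℂ and ρ ≥ 0. Define S(f) = |α₀|² + |α₁|² + 2|α₀||α₁|·cos(2πf + φ) for an arbitrary fixed φ ∈ ℝ, a = 1 + ρ(|α₀|² + |α₁|²), and b = 2ρ|α₀||α₁|. Then ∫₀¹ log₂(1 + ρ·S(f)) df = log₂((a + sqrt(a² − b²))/2). -/
/-!
Write `a + b cos θ = ‖u e^{iθ} + v‖²` with `u = (√(a+b) + √(a-b))/2` and `v = (√(a+b) - √(a-b))/2`,
so that `|v| ≤ u`. The mean of `log (a + b cos θ)` over a period is then twice the circle average of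
`log ‖z + v‖` over `‖z‖ = u`, which is `log u` because `-v` lies in the closed disc (Jensen), and
`u² = (a + √(a² - b²))/2`.
-/

open Real intervalIntegral

theorem Function.Periodic.intervalIntegral_comp_mul_add {E : Type*} [NormedAddCommGroup E]
    [NormedSpace ℝ E] {g : ℝ → E} {T : ℝ} (hg : Function.Periodic g T) (hT : T ≠ 0) (c : ℝ) :
    ∫ x in (0:ℝ)..1, g (T * x + c) = T⁻¹ • ∫ x in (0:ℝ)..T, g x := by
  rw [integral_comp_mul_add g hT, mul_zero, zero_add, mul_one, add_comm T,
    hg.intervalIntegral_add_eq c 0, zero_add]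

theorem integral_log_sq_add_sq_add_two_mul_mul_cos {u v : ℝ} (h : |v| ≤ |u|) :
    ∫ θ in (0:ℝ)..2 * π, log (u ^ 2 + v ^ 2 + 2 * u * v * cos θ) = 4 * π * log u := by
  have hnorm (θ : ℝ) :
      u ^ 2 + v ^ 2 + 2 * u * v * cos θ = ‖circleMap 0 u θ - (-v : ℂ)‖ ^ 2 := by
    rw [Complex.sq_norm, Complex.normSq_apply]
    simp only [circleMap, zero_add, sub_neg_eq_add, Complex.add_re, Complex.mul_re,
      Complex.ofReal_re, Complex.exp_re, Complex.I_re, mul_zero, Complex.ofReal_im, Complex.I_im,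
      mul_one, sub_self, exp_zero, Complex.mul_im, add_zero, one_mul, Complex.exp_im, zero_mul,
      sub_zero, Complex.add_im]
    nlinarith [sin_sq_add_cos_sq θ]
  have havg := circleAverage_log_norm_sub_const_of_mem_closedBall (c := 0) (R := u) (a := -v)
    (by simpa using h)
  rw [circleAverage_def, smul_eq_mul, inv_mul_eq_iff_eq_mul₀ (by positivity)] at havg
  simp_rw [hnorm, log_pow, integral_const_mul, havg]
  push_cast
  ring

theorem integral_log_add_mul_cos {a b : ℝ} (h : |b| ≤ a) :
    ∫ θ in (0:ℝ)..2 * π, log (a + b * cos θ) = 2 * π * log ((a + √(a ^ 2 - b ^ 2)) / 2) := by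
  obtain ⟨hb₁, hb₂⟩ := abs_le.mp h
  set p := √(a + b)
  set q := √(a - b)
  have hp₀ : 0 ≤ p := sqrt_nonneg _
  have hq₀ : 0 ≤ q := sqrt_nonneg _
  have hp : p ^ 2 = a + b := sq_sqrt (by linarith)
  have hq : q ^ 2 = a - b := sq_sqrt (by linarith)
  have hpq : √(a ^ 2 - b ^ 2) = p * q := by
    rw [← sqrt_mul (by linarith)]
    ring_nf
  have hsplit (θ : ℝ) : a + b * cos θ =
      ((p + q) / 2) ^ 2 + ((p - q) / 2) ^ 2 + 2 * ((p + q) / 2) * ((p - q) / 2) * cos θ := by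
    linear_combination (-(1 + cos θ) / 2) * hp - (1 - cos θ) / 2 * hq
  have hsq : (a + p * q) / 2 = ((p + q) / 2) ^ 2 := by
    linear_combination (-1 / 4) * hp - 1 / 4 * hq
  simp_rw [hsplit]
  rw [integral_log_sq_add_sq_add_two_mul_mul_cos (abs_le_abs (by linarith) (by linarith)), hpq,
    hsq, log_pow]
  push_cast
  ring

/-- Equation (20): closed form of the rate integral of the soft-handoff model,
`∫₀¹ log₂(1 + ρ S(f)) df = log₂((a + √(a² - b²))/2)`. -/
theorem two_tap_rate_integral (α₀ α₁ : ℂ) (ρ : ℝ) (hρ : 0 ≤ ρ) (φ : ℝ)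
    (S : ℝ → ℝ)
    (hS : ∀ f : ℝ, S f = ‖α₀‖ ^ 2 + ‖α₁‖ ^ 2 +
      2 * ‖α₀‖ * ‖α₁‖ * Real.cos (2 * Real.pi * f + φ))
    (a b : ℝ)
    (ha : a = 1 + ρ * (‖α₀‖ ^ 2 + ‖α₁‖ ^ 2))
    (hb : b = 2 * ρ * ‖α₀‖ * ‖α₁‖) :
    ∫ f in (0:ℝ)..1, Real.logb 2 (1 + ρ * S f) =
      Real.logb 2 ((a + Real.sqrt (a ^ 2 - b ^ 2)) / 2) := by
  have hb₀ : 0 ≤ b := by rw [hb]; positivity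
  have hab : |b| ≤ a := by
    rw [abs_of_nonneg hb₀, ha, hb]
    nlinarith [mul_nonneg hρ (sq_nonneg (‖α₀‖ - ‖α₁‖))]
  have hrate (f : ℝ) : 1 + ρ * S f = a + b * cos (2 * π * f + φ) := by
    rw [hS, ha, hb]
    ring
  have hper : Function.Periodic (fun θ => log (a + b * cos θ)) (2 * π) := fun θ => by
    simp only [cos_add_two_pi]
  simp_rw [hrate, logb]
  rw [integral_div, hper.intervalIntegral_comp_mul_add (by positivity) φ,
    integral_log_add_mul_cos hab, smul_eq_mul, inv_mul_cancel_left₀ (by positivity)]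
end

section
/- Let q̃ ∈ (0,1), P > 0 and α₀, α₁ ∈ ℂ. Define g(β) = q̃·sqrt((1 + Pβ(|α₀|² + |α₁|²))² − (2Pβ|α₀||α₁|)²) for β ≥ 0. Then there exists exactly one β ∈ [0, 1−q̃] such that g(β) = 1 − β. -/
/-!
Writing `a = 1 + Pβ(|α₀|² + |α₁|²)` and `b = 2Pβ|α₀||α₁|`, the radicand
`a² - b² = 1 + 2Pβ(|α₀|² + |α₁|²) + (Pβ)²(|α₀|² - |α₁|²)²` is at least `1` and nondecreasing
for `β ≥ 0`. Hence `β ↦ q̃ √(a² - b²) + β` is continuous and strictly increasing, equals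
`q̃ < 1` at `β = 0` and is at least `q̃ + (1 - q̃) = 1` at `β = 1 - q̃`; the intermediate value
theorem gives exactly one solution of `q̃ √(a² - b²) + β = 1` in `[0, 1 - q̃]`.
-/

open Set

theorem StrictMonoOn.existsUnique_mem_Icc_eq_of_continuousOn
    {α δ : Type*} [ConditionallyCompleteLinearOrder α] [TopologicalSpace α] [OrderTopology α]
    [DenselyOrdered α] [LinearOrder δ] [TopologicalSpace δ] [OrderClosedTopology δ]
    {f : α → δ} {a b : α} {y : δ} (hmono : StrictMonoOn f (Icc a b)) (hab : a ≤ b)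
    (hf : ContinuousOn f (Icc a b)) (hy : y ∈ Icc (f a) (f b)) :
    ∃! x, x ∈ Icc a b ∧ f x = y := by
  obtain ⟨x, hx, rfl⟩ := intermediate_value_Icc hab hf hy
  exact ⟨x, ⟨hx, rfl⟩, fun x' ⟨hx', hfx'⟩ => hmono.injOn hx' hx hfx'⟩

/-- The quantity `a² - b²` of the two-tap channel, with `x = |α₀|` and `y = |α₁|`. -/
def twoTapRadicand (P x y β : ℝ) : ℝ :=
  (1 + P * β * (x ^ 2 + y ^ 2)) ^ 2 - (2 * P * β * x * y) ^ 2

theorem twoTapRadicand_eq (P x y β : ℝ) :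
    twoTapRadicand P x y β =
      1 + 2 * (P * β) * (x ^ 2 + y ^ 2) + (P * β) ^ 2 * (x ^ 2 - y ^ 2) ^ 2 := by
  unfold twoTapRadicand
  ring

theorem monotoneOn_twoTapRadicand {P : ℝ} (hP : 0 ≤ P) (x y : ℝ) :
    MonotoneOn (twoTapRadicand P x y) (Ici 0) := by
  intro β (hβ : 0 ≤ β) γ _ hβγ
  have hPβγ : P * β ≤ P * γ := mul_le_mul_of_nonneg_left hβγ hP
  have hPβ : 0 ≤ P * β := mul_nonneg hP hβ
  simp only [twoTapRadicand_eq]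
  gcongr

theorem one_le_twoTapRadicand {P β : ℝ} (hP : 0 ≤ P) (hβ : 0 ≤ β) (x y : ℝ) :
    1 ≤ twoTapRadicand P x y β := by
  simpa [twoTapRadicand] using monotoneOn_twoTapRadicand hP x y self_mem_Ici hβ hβ

/-- Existence and uniqueness of the erasure fixed point `q̃ √(a²-b²) = 1-β` on `[0, 1-q̃]`
for the soft-handoff model with adaptive power control. -/
theorem erasure_fixed_point_exists_unique
    (qt P : ℝ) (hq0 : 0 < qt) (hq1 : qt < 1) (hP : 0 < P) (α₀ α₁ : ℂ) :
    ∃! β : ℝ, β ∈ Set.Icc (0 : ℝ) (1 - qt) ∧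
      qt * Real.sqrt ((1 + P * β * (‖α₀‖ ^ 2 + ‖α₁‖ ^ 2)) ^ 2 -
        (2 * P * β * ‖α₀‖ * ‖α₁‖) ^ 2) = 1 - β := by
  let R := twoTapRadicand P ‖α₀‖ ‖α₁‖
  let h : ℝ → ℝ := fun β => qt * Real.sqrt (R β) + β
  have hmono : StrictMonoOn h (Icc 0 (1 - qt)) := by
    intro β hβ γ hγ hβγ
    have := Real.sqrt_le_sqrt (monotoneOn_twoTapRadicand hP.le ‖α₀‖ ‖α₁‖ hβ.1 hγ.1 hβγ.le)
    have := mul_le_mul_of_nonneg_left this hq0.le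
    simp only [h]
    linarith
  have hcont : ContinuousOn h (Icc 0 (1 - qt)) := by
    unfold h R twoTapRadicand
    fun_prop
  have hend : 1 ≤ h (1 - qt) := by
    have := Real.one_le_sqrt.2 (one_le_twoTapRadicand hP.le (sub_nonneg.2 hq1.le) ‖α₀‖ ‖α₁‖)
    have := mul_le_mul_of_nonneg_left this hq0.le
    simp only [h, R]
    linarith
  have h0 : h 0 = qt := by simp [h, R, twoTapRadicand]
  refine (existsUnique_congr fun β => and_congr_right fun _ => ?_).1
    (hmono.existsUnique_mem_Icc_eq_of_continuousOn (sub_nonneg.2 hq1.le) hcont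
      ⟨h0.trans_le hq1.le, hend⟩)
  exact ⟨eq_sub_of_add_eq, add_eq_of_eq_sub⟩
end

section
/- Let 0 < q < 1, K a positive integer, P > 0, and α₀, α₁ ∈ ℂ. Set q̃ = q^K and assume q̃²P²(|α₀|²−|α₁|²)² ≠ 1. Define β = (q̃·sqrt(2P(|α₀|²+|α₁|²) + P²(|α₀|⁴+|α₁|⁴) − 2P²|α₀|²|α₁|²(1−2q̃²) + 1) − q̃²P(|α₀|²+|α₁|²) − 1) / (q̃²P²(|α₀|²−|α₁|²)² − 1). Then 0 ≤ β ≤ 1 − q̃ and q̃·sqrt((1 + Pβ(|α₀|²+|α₁|²))² − (2Pβ|α₀||α₁|)²) = 1 − β. -/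
/-!
Write `s = ‖α₀‖² + ‖α₁‖²`, `d = ‖α₀‖² - ‖α₁‖²`, `c = q̃²Ps + 1`, `D = q̃²P²d² - 1` and `R` for the
radicand. Since `(2‖α₀‖‖α₁‖)² = s² - d²`, squaring the fixed-point equation gives the quadratic
`Dβ² + 2cβ - (1 - q̃²) = 0`, whose discriminant is `4q̃²R`; the closed form `β = (q̃√R - c)/D` is the
root taken with the `+` sign. Rationalizing, `β = (1 - q̃²)/(q̃√R + c)`, which is nonnegative, and
at most `1 - q̃` because `R ≥ 1`.
-/

theorem one_le_radicand {P : ℝ} (hP : 0 ≤ P) (a b t : ℝ) :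
    1 ≤ 2 * P * (a ^ 2 + b ^ 2) + P ^ 2 * (a ^ 4 + b ^ 4) -
      2 * P ^ 2 * a ^ 2 * b ^ 2 * (1 - 2 * t ^ 2) + 1 := by
  have hR : 2 * P * (a ^ 2 + b ^ 2) + P ^ 2 * (a ^ 4 + b ^ 4) -
      2 * P ^ 2 * a ^ 2 * b ^ 2 * (1 - 2 * t ^ 2) + 1 =
      1 + 2 * P * (a ^ 2 + b ^ 2) + (P * (a ^ 2 - b ^ 2)) ^ 2 + (2 * t * P * a * b) ^ 2 := by
    ring
  rw [hR]
  have : 0 ≤ 2 * P * (a ^ 2 + b ^ 2) + (P * (a ^ 2 - b ^ 2)) ^ 2 + (2 * t * P * a * b) ^ 2 := by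
    positivity
  linarith

section Rationalize

variable {K : Type*} [Field K] {x y k D : K}

theorem sub_div_eq_div_add_of_sq_eq (hD : D ≠ 0) (hxy : x + y ≠ 0) (h : x ^ 2 = y ^ 2 + k * D) :
    (x - y) / D = k / (x + y) := by
  rw [div_eq_div_iff hD hxy]
  linear_combination h

theorem quadratic_eq_zero_of_sq_eq (hD : D ≠ 0) (h : x ^ 2 = y ^ 2 + k * D) :
    D * ((x - y) / D) ^ 2 + 2 * y * ((x - y) / D) - k = 0 := by
  field_simp
  linear_combination h

end Rationalize

theorem mul_sqrt_eq_of_sq_mul_eq {t X y : ℝ} (ht : 0 ≤ t) (hy : 0 ≤ y) (h : t ^ 2 * X = y ^ 2) :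
    t * √X = y := by
  rw [← Real.sqrt_sq ht, ← Real.sqrt_mul (sq_nonneg t), h, Real.sqrt_sq hy]

/-- Equation (16): the explicit closed-form solution `β` of the erasure fixed-point
equation `q̃ √(a²-b²) = 1-β` for the soft-handoff model with multi-cell processing and
adaptive power control, where `q̃ = q^K`. -/
theorem explicit_beta_solves_fixed_point
    (q : ℝ) (hq0 : 0 < q) (hq1 : q < 1) (K : ℕ) (hK : 0 < K)
    (P : ℝ) (hP : 0 < P) (α₀ α₁ : ℂ)
    (qt : ℝ) (hqt : qt = q ^ K)
    (hden : qt ^ 2 * P ^ 2 * (‖α₀‖ ^ 2 - ‖α₁‖ ^ 2) ^ 2 ≠ 1)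
    (β : ℝ)
    (hβ : β = (qt * Real.sqrt (2 * P * (‖α₀‖ ^ 2 + ‖α₁‖ ^ 2) +
        P ^ 2 * (‖α₀‖ ^ 4 + ‖α₁‖ ^ 4) -
        2 * P ^ 2 * ‖α₀‖ ^ 2 * ‖α₁‖ ^ 2 * (1 - 2 * qt ^ 2) + 1) -
        qt ^ 2 * P * (‖α₀‖ ^ 2 + ‖α₁‖ ^ 2) - 1) /
      (qt ^ 2 * P ^ 2 * (‖α₀‖ ^ 2 - ‖α₁‖ ^ 2) ^ 2 - 1)) :
    0 ≤ β ∧ β ≤ 1 - qt ∧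
      qt * Real.sqrt ((1 + P * β * (‖α₀‖ ^ 2 + ‖α₁‖ ^ 2)) ^ 2 -
        (2 * P * β * ‖α₀‖ * ‖α₁‖) ^ 2) = 1 - β := by
  set a := ‖α₀‖
  set b := ‖α₁‖
  set R := 2 * P * (a ^ 2 + b ^ 2) + P ^ 2 * (a ^ 4 + b ^ 4) -
      2 * P ^ 2 * a ^ 2 * b ^ 2 * (1 - 2 * qt ^ 2) + 1 with hR
  set c := qt ^ 2 * P * (a ^ 2 + b ^ 2) + 1
  set D := qt ^ 2 * P ^ 2 * (a ^ 2 - b ^ 2) ^ 2 - 1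
  have ht0 : 0 < qt := hqt ▸ pow_pos hq0 K
  have ht1 : qt < 1 := hqt ▸ pow_lt_one₀ hq0.le hq1 hK.ne'
  have hD : D ≠ 0 := sub_ne_zero.mpr hden
  rw [sub_sub] at hβ
  have hR1 : 1 ≤ R := one_le_radicand hP.le a b qt
  have hsqrtR : 1 ≤ √R := Real.one_le_sqrt.mpr hR1
  have hdisc : (qt * √R) ^ 2 = c ^ 2 + (1 - qt ^ 2) * D := by
    linear_combination qt ^ 2 * Real.sq_sqrt (zero_le_one.trans hR1) + qt ^ 2 * hR
  have hsum_ge : qt + 1 ≤ qt * √R + c := by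
    have : 0 ≤ qt ^ 2 * P * (a ^ 2 + b ^ 2) := by positivity
    nlinarith
  have hβ' : β = (1 - qt ^ 2) / (qt * √R + c) :=
    hβ.trans (sub_div_eq_div_add_of_sq_eq hD (by linarith) hdisc)
  have hβ_le : β ≤ 1 - qt := by
    rw [hβ', div_le_iff₀ (by linarith)]
    nlinarith
  have hquad := quadratic_eq_zero_of_sq_eq hD hdisc
  rw [← hβ] at hquad
  refine ⟨hβ'.symm ▸ div_nonneg (by nlinarith) (by linarith), hβ_le,
    mul_sqrt_eq_of_sq_mul_eq ht0.le (by linarith) ?_⟩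
  linear_combination hquad
end
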